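/- arXiv:2304.08783 — 5 statements merged into one kernel-verified Lean document; each statement's English description precedes it below -/
import Mathlib

section
/- Let G=(V0,V1,E) be a connectivity game and let C={C_1,...,C_k} with k>1 be a collection of forced traps (FTs) that partitions the vertex set V=V0∪V1. If G is forced-connected, then for every X∈C there exists a distinct Y∈C such that either Y is a singleton consisting of a player-1 vertex y with E(y)⊆X, or Y contains a player-0 vertex y with E(y)∩X≠∅. -/
namespace Games

universe u

variable {V : Type u}

/-- A connectivity game: player 0's positions `V0`, player 1's positions `V1`,
and the edge set `E`. -/
structure ConnGame (V : Type u) where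
  V0 : Set V
  V1 : Set V
  E : Set (V × V)

namespace ConnGame

/-- The vertex set `V = V0 ∪ V1`. -/
def verts (G : ConnGame V) : Set V := G.V0 ∪ G.V1

/-- The sub-game of `G` played on the vertex set `X` (edges restricted to `X`). -/
def restrict (G : ConnGame V) (X : Set V) : ConnGame V :=
  ⟨G.V0 ∩ X, G.V1 ∩ X, {e | e ∈ G.E ∧ e.1 ∈ X ∧ e.2 ∈ X}⟩

end ConnGame

/-- Reachability by a directed path in the digraph with edge set `E`. -/
def Reach (E : Set (V × V)) : V → V → Prop :=
  Relation.ReflTransGen fun x y => (x, y) ∈ E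

/-- Reachability by a directed path staying inside `X`. -/
def ReachWithin (E : Set (V × V)) (X : Set V) : V → V → Prop :=
  Relation.ReflTransGen fun x y => (x, y) ∈ E ∧ x ∈ X ∧ y ∈ X

/-- The set of strongly connected components of the digraph with vertex set `W`
and edge set `E`. -/
def SCCs (W : Set V) (E : Set (V × V)) : Set (Set V) :=
  {S | ∃ v ∈ W, S = {u | u ∈ W ∧ Reach E v u ∧ Reach E u v}}

/-- The digraph with vertex set `W` and edge set `E` is strongly connected. -/
def StronglyConnected (W : Set V) (E : Set (V × V)) : Prop :=
  ∀ a ∈ W, ∀ b ∈ W, Reach E a b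

/-- `E⁻¹(S)`: the set of predecessors of `S`. -/
def preds (E : Set (V × V)) (S : Set V) : Set V := {u | ∃ s ∈ S, (u, s) ∈ E}

/-- `Force(U, S) = {v ∈ (E⁻¹(S) \ S) ∩ U : E(v) ⊆ S}`. -/
def Force (E : Set (V × V)) (U S : Set V) : Set V :=
  {v | v ∈ (preds E S \ S) ∩ U ∧ ∀ u, (v, u) ∈ E → u ∈ S}

/-- `X` is a forced trap (FT) w.r.t. player 1's positions `V1` and edge set `E`:
either `X` is a singleton, or `|X| > 1`, `E(X ∩ V1) ⊆ X` and any two vertices of `X`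
are strongly connected within `X`. -/
def IsFT (V1 : Set V) (E : Set (V × V)) (X : Set V) : Prop :=
  (∃ v, X = {v}) ∨
    (X.Nontrivial ∧ (∀ v ∈ X ∩ V1, ∀ u, (v, u) ∈ E → u ∈ X) ∧
      ∀ a ∈ X, ∀ b ∈ X, ReachWithin E X a b)

/-- The derivative sequence of `G`: `deriv G k = (E_k, U_k, F_k)`. -/
def deriv (G : ConnGame V) : ℕ → Set (V × V) × Set V × Set V
  | 0 => ({e | e ∈ G.E ∧ e.1 ∈ G.V0}, G.V1, ∅)
  | k + 1 =>
    let p := deriv G k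
    let F : Set V := ⋃ S ∈ SCCs G.verts p.1, Force G.E p.2.1 S
    (p.1 ∪ {e | e ∈ G.E ∧ e.1 ∈ F}, p.2.1 \ F, F)

/-- The edge set `E_k` of the `k`-th derivative `G_k`. -/
def Ek (G : ConnGame V) (k : ℕ) : Set (V × V) := (deriv G k).1

/-- The set `U_k`. -/
def Uk (G : ConnGame V) (k : ℕ) : Set V := (deriv G k).2.1

/-- The set `F_k`. -/
def Fk (G : ConnGame V) (k : ℕ) : Set V := (deriv G k).2.2

/-- The stabilization point: the minimal `k > 0` with `F_k = ∅`. -/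
noncomputable def stab (G : ConnGame V) : ℕ := sInf {k | 0 < k ∧ Fk G k = ∅}

/-- Finite plays (histories) consistent with the player-0 strategy `s`, starting
at `v0`: at a player-0 position the strategy's (legal) move is played, at a
player-1 position any legal move may be played. -/
inductive Hist (G : ConnGame V) (s : List V → V) (v0 : V) : List V → Prop
  | base : Hist G s v0 [v0]
  | move0 (h : List V) (v : V) (hh : Hist G s v0 (h ++ [v])) (hv : v ∈ G.V0)
      (he : (v, s (h ++ [v])) ∈ G.E) : Hist G s v0 ((h ++ [v]) ++ [s (h ++ [v])])
  | move1 (h : List V) (v u : V) (hh : Hist G s v0 (h ++ [v])) (hv : v ∈ G.V1)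
      (he : (v, u) ∈ G.E) : Hist G s v0 ((h ++ [v]) ++ [u])

/-- The prefix `ρ 0, …, ρ n` of an infinite sequence. -/
def prefixUpTo (ρ : ℕ → V) (n : ℕ) : List V := List.ofFn fun i : Fin (n + 1) => ρ i

/-- `ρ` is an infinite play consistent with strategy `s` from `v0`. -/
def InfPlay (G : ConnGame V) (s : List V → V) (v0 : V) (ρ : ℕ → V) : Prop :=
  ∀ n, Hist G s v0 (prefixUpTo ρ n)

/-- The set of vertices visited infinitely often by `ρ`. -/
def InfSet (ρ : ℕ → V) : Set V := {v | ∀ N, ∃ n, N ≤ n ∧ ρ n = v}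

/-- `s` is a winning strategy for player 0 from `v0` in the connectivity game on `G`:
along every consistent history player 0's moves are legal and the play is never stuck
(so all maximal consistent plays are infinite), and every infinite consistent play
visits every vertex of `G` infinitely often. -/
def WinsConnFrom (G : ConnGame V) (s : List V → V) (v0 : V) : Prop :=
  (∀ h v, Hist G s v0 (h ++ [v]) →
      (v ∈ G.V0 → (v, s (h ++ [v])) ∈ G.E) ∧ (v ∈ G.V1 → ∃ u, (v, u) ∈ G.E)) ∧
    ∀ ρ : ℕ → V, InfPlay G s v0 ρ → InfSet ρ = G.verts

/-- `G` is forced-connected: player 0 wins the connectivity game from every vertex. -/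
def ForcedConnected (G : ConnGame V) : Prop :=
  ∀ v ∈ G.verts, ∃ s : List V → V, WinsConnFrom G s v

/-- The simplified derivative sequence `G'_k`, where the choice function `c`
selects one outgoing edge per forced vertex: `deriv' G c k = (E'_k, U_k, F_k)`. -/
def deriv' (G : ConnGame V) (c : V → V) : ℕ → Set (V × V) × Set V × Set V
  | 0 => ({e | e ∈ G.E ∧ e.1 ∈ G.V0}, G.V1, ∅)
  | k + 1 =>
    let p := deriv' G c k
    let F : Set V := ⋃ S ∈ SCCs G.verts p.1, Force G.E p.2.1 S
    (p.1 ∪ {e | ∃ f ∈ F, e = (f, c f)}, p.2.1 \ F, F)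

/-- The edge set `E'_k` of the simplified derivative `G'_k`. -/
def Ek' (G : ConnGame V) (c : V → V) (k : ℕ) : Set (V × V) := (deriv' G c k).1

/-- The set `F_k` of the simplified derivative sequence. -/
def Fk' (G : ConnGame V) (c : V → V) (k : ℕ) : Set V := (deriv' G c k).2.2

/-- The stabilization point of the simplified derivative sequence. -/
noncomputable def stab' (G : ConnGame V) (c : V → V) : ℕ :=
  sInf {k | 0 < k ∧ Fk' G c k = ∅}

/-- The reduced derivative sequence `G''_k` on the vertex set `V0`:
`deriv'' G c k = (E''_k, U''_k, F''_k)`. -/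
def deriv'' (G : ConnGame V) (c : V → V) : ℕ → Set (V × V) × Set V × Set V
  | 0 => (∅, G.V1, ∅)
  | k + 1 =>
    let p := deriv'' G c k
    let F : Set V := ⋃ S ∈ SCCs G.V0 p.1, Force G.E p.2.1 S
    (p.1 ∪ {e | ∃ f ∈ F, (e.1, f) ∈ G.E ∧ e.2 = c f}, p.2.1 \ F, F)

/-- The edge set `E''_k` of the reduced derivative `G''_k`. -/
def Ek'' (G : ConnGame V) (c : V → V) (k : ℕ) : Set (V × V) := (deriv'' G c k).1

/-- The set `F''_k` of the reduced derivative sequence. -/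
def Fk'' (G : ConnGame V) (c : V → V) (k : ℕ) : Set V := (deriv'' G c k).2.2

/-- The stabilization point of the reduced derivative sequence. -/
noncomputable def stab'' (G : ConnGame V) (c : V → V) : ℕ :=
  sInf {k | 0 < k ∧ Fk'' G c k = ∅}

/-- The derivation forest: `forest G k = (N_k, Son_k)`. -/
def forest (G : ConnGame V) : ℕ → Set (Set V) × Set (Set V × Set V)
  | 0 => ({S | ∃ v ∈ G.verts, S = {v}}, ∅)
  | k + 1 =>
    let p := forest G k
    let C : Set (Set V) := SCCs G.verts (Ek G (k + 1)) \ p.1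
    (p.1 ∪ C, p.2 ∪ {q | q.1 ∈ C ∧ q.2 ∈ SCCs G.verts (Ek G k) ∧ q.2 ⊂ q.1})

/-- The node set `N` of the derivation forest `Γ(G) = Γ_s(G)`. -/
noncomputable def forestN (G : ConnGame V) : Set (Set V) := (forest G (stab G)).1

/-- The son relation `Son` of the derivation forest `Γ(G) = Γ_s(G)`. -/
noncomputable def forestSon (G : ConnGame V) : Set (Set V × Set V) :=
  (forest G (stab G)).2


/-- The trajectory determined by the successor function `nxt`:
`traj nxt v0 n = (history before step n, current vertex)`. -/
def traj (nxt : List V → V → V) (v0 : V) : ℕ → List V × V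
  | 0 => ([], v0)
  | n + 1 =>
    ((traj nxt v0 n).1 ++ [(traj nxt v0 n).2],
      nxt (traj nxt v0 n).1 (traj nxt v0 n).2)

lemma traj_prefix (nxt : List V → V → V) (v0 : V) (n : ℕ) :
    prefixUpTo (fun k => (traj nxt v0 k).2) n
      = (traj nxt v0 n).1 ++ [(traj nxt v0 n).2] := by
  induction n with
  | zero => simp [prefixUpTo, traj]
  | succ n ih =>
    rw [prefixUpTo, List.ofFn_succ']
    simp only [List.concat_eq_append]
    have h1 : (traj nxt v0 (n + 1)).1 = (traj nxt v0 n).1 ++ [(traj nxt v0 n).2] :=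
      rfl
    rw [h1]
    congr 1

/-- If a collection `C` of forced traps with more than one member
partitions the vertex set of a forced-connected connectivity game `G`, then every
`X ∈ C` has a distinct `Y ∈ C` that is either a singleton player-1 vertex all of whose
moves go into `X`, or contains a player-0 vertex with a move into `X`. -/
theorem stmt0 [Fintype V] (G : ConnGame V)
    (hdisj : Disjoint G.V0 G.V1)
    (hEsub : G.E ⊆ (G.V0 ×ˢ G.V1) ∪ (G.V1 ×ˢ G.V0))
    (C : Set (Set V))
    (hft : ∀ X ∈ C, IsFT G.V1 G.E X)
    (hcover : ⋃₀ C = G.verts)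
    (hpdisj : ∀ X ∈ C, ∀ Y ∈ C, X ≠ Y → Disjoint X Y)
    (hk : C.Nontrivial)
    (hfc : ForcedConnected G) :
    ∀ X ∈ C, ∃ Y ∈ C, Y ≠ X ∧
      ((∃ y, Y = {y} ∧ y ∈ G.V1 ∧ ∀ u, (y, u) ∈ G.E → u ∈ X) ∨
        (∃ y ∈ Y ∩ G.V0, ∃ u ∈ X, (y, u) ∈ G.E)) := by
  classical
  intro X hX
  by_contra hcon
  push_neg at hcon
  -- every class is nonempty
  have hne : ∀ Y ∈ C, Y.Nonempty := by
    intro Y hY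
    rcases hft Y hY with ⟨y, rfl⟩ | ⟨hnt, _⟩
    · exact ⟨y, rfl⟩
    · exact hnt.nonempty
  -- each class is a subset of the vertex set
  have hsub : ∀ Y ∈ C, Y ⊆ G.verts := by
    intro Y hY
    rw [← hcover]; exact Set.subset_sUnion_of_mem hY
  -- locate a vertex outside X
  obtain ⟨A, hA, B, hB, hAB⟩ := hk
  have hYex : ∃ Y ∈ C, Y ≠ X := by
    by_cases hAx : A = X
    · exact ⟨B, hB, by rw [← hAx]; exact fun h => hAB h.symm⟩
    · exact ⟨A, hA, hAx⟩
  obtain ⟨Y0, hY0, hY0X⟩ := hYex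
  obtain ⟨v0, hv0Y⟩ := hne Y0 hY0
  have hv0X : v0 ∉ X := fun h =>
    (hpdisj Y0 hY0 X hX hY0X).le_bot ⟨hv0Y, h⟩
  have hv0verts : v0 ∈ G.verts := hsub Y0 hY0 hv0Y
  -- for every vertex outside X find its class
  have hclass : ∀ v ∈ G.verts, v ∉ X → ∃ Y ∈ C, v ∈ Y ∧ Y ≠ X := by
    intro v hv hvX
    rw [← hcover] at hv
    obtain ⟨Y, hY, hvY⟩ := hv
    exact ⟨Y, hY, hvY, fun h => hvX (h ▸ hvY)⟩
  -- a winning strategy from v0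
  obtain ⟨s, hs⟩ := hfc v0 hv0verts
  -- choice of non-X successor for player 1 vertices
  set pick : V → V := fun v =>
    if h : ∃ u, (v, u) ∈ G.E ∧ u ∉ X then h.choose else v0 with hpick
  set nxt : List V → V → V := fun h v =>
    if v ∈ G.V0 then s (h ++ [v]) else pick v with hnxt
  set ρ : ℕ → V := fun n => (traj nxt v0 n).2 with hρ
  -- main invariant
  have main : ∀ n, Hist G s v0 ((traj nxt v0 n).1 ++ [(traj nxt v0 n).2]) ∧
      (traj nxt v0 n).2 ∉ X ∧ (traj nxt v0 n).2 ∈ G.verts := by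
    intro n
    induction n with
    | zero =>
      refine ⟨?_, hv0X, hv0verts⟩
      show Hist G s v0 ([] ++ [v0])
      simpa using Hist.base
    | succ n ih =>
      obtain ⟨ihH, ihX, ihV⟩ := ih
      set h := (traj nxt v0 n).1 with hh
      set v := (traj nxt v0 n).2 with hv
      obtain ⟨Y, hYC, hvY, hYX⟩ := hclass v ihV ihX
      have hconY := hcon Y hYC hYX
      have hstep : (traj nxt v0 (n + 1)).1 = h ++ [v] ∧
          (traj nxt v0 (n + 1)).2 = nxt h v := ⟨rfl, rfl⟩
      by_cases hv0' : v ∈ G.V0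
      · -- player 0 moves according to the strategy
        have hedge : (v, s (h ++ [v])) ∈ G.E := (hs.1 h v ihH).1 hv0'
        have hnx : nxt h v = s (h ++ [v]) := by simp [hnxt, hv0']
        refine ⟨?_, ?_, ?_⟩
        · rw [hstep.1, hstep.2, hnx]
          exact Hist.move0 h v ihH hv0' hedge
        · rw [hstep.2, hnx]
          intro hmem
          exact hconY.2 v ⟨hvY, hv0'⟩ (s (h ++ [v])) hmem hedge
        · rw [hstep.2, hnx]
          rcases hEsub hedge with hE | hE
          · exact Or.inr hE.2
          · exact Or.inl hE.2
      · -- player 1 vertex: pick a successor outside X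
        have hv1 : v ∈ G.V1 := ihV.resolve_left hv0'
        have hex : ∃ u, (v, u) ∈ G.E ∧ u ∉ X := by
          rcases hft Y hYC with ⟨y, hYy⟩ | ⟨hnt, htrap, _⟩
          · have hyv : y = v := by
              have := hYy ▸ hvY; exact this.symm
            subst hyv
            exact hconY.1 v hYy hv1
          · obtain ⟨u, hu⟩ := (hs.1 h v ihH).2 hv1
            have huY : u ∈ Y := htrap v ⟨hvY, hv1⟩ u hu
            exact ⟨u, hu, fun hmem =>
              (hpdisj Y hYC X hX hYX).le_bot ⟨huY, hmem⟩⟩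
        have hpv : pick v = hex.choose := by simp [hpick, hex]
        have hnx : nxt h v = pick v := by simp [hnxt, hv0']
        obtain ⟨hedge, hnX⟩ := hex.choose_spec
        refine ⟨?_, ?_, ?_⟩
        · rw [hstep.1, hstep.2, hnx, hpv]
          exact Hist.move1 h v _ ihH hv1 hedge
        · rw [hstep.2, hnx, hpv]; exact hnX
        · rw [hstep.2, hnx, hpv]
          rcases hEsub hedge with hE | hE
          · exact Or.inr hE.2
          · exact Or.inl hE.2
  -- ρ is an infinite consistent play
  have hplay : InfPlay G s v0 ρ := by
    intro n
    rw [hρ, traj_prefix]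
    exact (main n).1
  have hinf : InfSet ρ = G.verts := hs.2 ρ hplay
  -- contradiction: a vertex of X is visited
  obtain ⟨x, hx⟩ := hne X hX
  have hxverts : x ∈ G.verts := hsub X hX hx
  have hxinf : x ∈ InfSet ρ := hinf ▸ hxverts
  obtain ⟨n, _, hρn⟩ := hxinf 0
  have : ρ n ∈ X := hρn.symm ▸ hx
  exact (main n).2.1 this
end Games
end

section
/- Let G=(V0,V1,E) be a connectivity game and let (G_k)_{k≥0} be its derivative sequence. If G is forced-connected and G_k has more than one strongly connected component, then G_k ≠ G_{k+1} (i.e., E_k ≠ E_{k+1}). -/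
namespace Games

universe u

variable {V : Type u}

section Stmt1Aux

lemma Ek_succ_eq (G : ConnGame V) (k : ℕ) :
    Ek G (k+1) = Ek G k ∪ {e | e ∈ G.E ∧ e.1 ∈ Fk G (k+1)} := rfl

lemma Fk_succ_eq (G : ConnGame V) (k : ℕ) :
    Fk G (k+1) = ⋃ S ∈ SCCs G.verts (Ek G k), Force G.E (Uk G k) S := rfl

lemma Uk_succ_eq (G : ConnGame V) (k : ℕ) :
    Uk G (k+1) = Uk G k \ Fk G (k+1) := rfl

lemma Ek_subset_E (G : ConnGame V) : ∀ k, Ek G k ⊆ G.E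
  | 0 => fun _ he => he.1
  | k+1 => fun e he => he.elim (fun h => Ek_subset_E G k h) (fun h => h.1)

lemma Uk_subset_V1 (G : ConnGame V) : ∀ k, Uk G k ⊆ G.V1
  | 0 => fun _ h => h
  | k+1 => fun x h => Uk_subset_V1 G k h.1

lemma mem_Ek_of_V0 (G : ConnGame V) {x y : V} (hx : x ∈ G.V0) (h : (x, y) ∈ G.E) :
    ∀ k, (x, y) ∈ Ek G k
  | 0 => ⟨h, hx⟩
  | k+1 => Or.inl (mem_Ek_of_V0 G hx h k)

/-- Any `G`-edge whose source is a vertex outside `U_k` is already in `E_k`. -/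
lemma mem_Ek_of_not_Uk (G : ConnGame V) {x y : V} (hx : x ∈ G.verts)
    (h : (x, y) ∈ G.E) : ∀ k, x ∉ Uk G k → (x, y) ∈ Ek G k
  | 0, hU => ⟨h, hx.resolve_right hU⟩
  | k+1, hU => by
    by_cases hxk : x ∈ Uk G k
    · have hF : x ∈ Fk G (k+1) := by
        by_contra hF
        exact hU ⟨hxk, hF⟩
      exact Or.inr ⟨h, hF⟩
    · exact Or.inl (mem_Ek_of_not_Uk G hx h k hxk)

/-- Sources of `E_k`-edges are in `V0` or outside `U_k`. -/
lemma Ek_src (G : ConnGame V) : ∀ k, ∀ {x y : V}, (x, y) ∈ Ek G k →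
    x ∈ G.V0 ∨ x ∉ Uk G k
  | 0, x, y, h => Or.inl h.2
  | k+1, x, y, h => by
    rcases h with h | h
    · exact (Ek_src G k h).imp_right (fun hx hx' => hx hx'.1)
    · exact Or.inr (fun hx' => hx'.2 h.2)

lemma mem_own_scc {W : Set V} {E : Set (V × V)} {v : V} (hv : v ∈ W) :
    v ∈ ({u | u ∈ W ∧ Reach E v u ∧ Reach E u v} : Set V) :=
  ⟨hv, Relation.ReflTransGen.refl, Relation.ReflTransGen.refl⟩

lemma scc_subset_of_mem {W : Set V} {E : Set (V × V)} {v1 v2 z : V}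
    (hz1 : z ∈ ({u | u ∈ W ∧ Reach E v1 u ∧ Reach E u v1} : Set V))
    (hz2 : z ∈ ({u | u ∈ W ∧ Reach E v2 u ∧ Reach E u v2} : Set V)) :
    ({u | u ∈ W ∧ Reach E v1 u ∧ Reach E u v1} : Set V) ⊆
      {u | u ∈ W ∧ Reach E v2 u ∧ Reach E u v2} := by
  rintro u ⟨hu, h1u, hu1⟩
  exact ⟨hu, Relation.ReflTransGen.trans hz2.2.1
      (Relation.ReflTransGen.trans hz1.2.2 h1u),
    Relation.ReflTransGen.trans hu1 (Relation.ReflTransGen.trans hz1.2.1 hz2.2.2)⟩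

lemma scc_eq_of_mem {W : Set V} {E : Set (V × V)} {S1 S2 : Set V}
    (h1 : S1 ∈ SCCs W E) (h2 : S2 ∈ SCCs W E) {z : V} (hz1 : z ∈ S1) (hz2 : z ∈ S2) :
    S1 = S2 := by
  obtain ⟨v1, hv1, rfl⟩ := h1
  obtain ⟨v2, hv2, rfl⟩ := h2
  exact Set.Subset.antisymm (scc_subset_of_mem hz1 hz2) (scc_subset_of_mem hz2 hz1)

/-- In a finite digraph there is a "source" SCC: no edge enters it from outside. -/
lemma exists_source_scc [Fintype V] (W : Set V) (E : Set (V × V))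
    (hend : ∀ e ∈ E, e.1 ∈ W) (hW : W.Nonempty) :
    ∃ T ∈ SCCs W E, ∀ x y : V, (x, y) ∈ E → y ∈ T → x ∈ T := by
  obtain ⟨u, huW, hmin⟩ :=
    Set.exists_min_image W (fun v => {x | Reach E x v}.ncard) (Set.toFinite W) hW
  refine ⟨{z | z ∈ W ∧ Reach E u z ∧ Reach E z u}, ⟨u, huW, rfl⟩, ?_⟩
  intro x y hxy hyT
  by_contra hxT
  have hxW : x ∈ W := hend _ hxy
  have hxu : Reach E x u :=
    Relation.ReflTransGen.trans (Relation.ReflTransGen.single hxy) hyT.2.2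
  have hsub : {z | Reach E z x} ⊆ {z | Reach E z u} :=
    fun z hz => Relation.ReflTransGen.trans hz hxu
  have hne : u ∉ {z | Reach E z x} := fun h => hxT ⟨hxW, h, hxu⟩
  have hss : {z | Reach E z x} ⊂ {z | Reach E z u} :=
    ⟨hsub, fun h => hne (h Relation.ReflTransGen.refl)⟩
  have hlt := Set.ncard_lt_ncard hss (Set.toFinite _)
  exact absurd (hmin x hxW) (by omega)

lemma prefixUpTo_succ (ρ : ℕ → V) (n : ℕ) :
    prefixUpTo ρ (n+1) = prefixUpTo ρ n ++ [ρ (n+1)] := by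
  unfold prefixUpTo
  rw [List.ofFn_succ', List.concat_eq_append]
  simp only [Fin.coe_castSucc, Fin.val_last]

open scoped Classical in
/-- The evading play: player 0 follows `s`, player 1 picks a successor outside `T`. -/
noncomputable def playP [Nonempty V] (G : ConnGame V) (s : List V → V) (T : Set V)
    (w : V) : ℕ → List V × V
  | 0 => ([w], w)
  | n+1 =>
    let p := playP G s T w n
    let y := if p.2 ∈ G.V0 then s p.1 else
      Classical.epsilon (fun u => (p.2, u) ∈ G.E ∧ u ∉ T)
    (p.1 ++ [y], y)

end Stmt1Aux

/-- If `G` is forced-connected and its `k`-th derivative `G_k` has more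
than one strongly connected component, then `G_k ≠ G_{k+1}`, i.e. `E_k ≠ E_{k+1}`. -/
theorem stmt1 [Fintype V] (G : ConnGame V)
    (hdisj : Disjoint G.V0 G.V1)
    (hEsub : G.E ⊆ (G.V0 ×ˢ G.V1) ∪ (G.V1 ×ˢ G.V0))
    (hfc : ForcedConnected G) (k : ℕ)
    (hscc : (SCCs G.verts (Ek G k)).Nontrivial) :
    Ek G k ≠ Ek G (k + 1) := by
  intro hEq
  classical
  obtain ⟨S1, hS1, S2, hS2, hS12⟩ := hscc
  have hvertsne : G.verts.Nonempty := by
    obtain ⟨v, hv, _⟩ := hS1; exact ⟨v, hv⟩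
  have hsrcW : ∀ e ∈ Ek G k, e.1 ∈ G.verts := by
    intro e he
    rcases hEsub (Ek_subset_E G k he) with h | h
    · exact Or.inl h.1
    · exact Or.inr h.1
  have htgtW : ∀ {x y : V}, (x, y) ∈ G.E → y ∈ G.verts := by
    intro x y h
    rcases hEsub h with h | h
    · exact Or.inr h.2
    · exact Or.inl h.2
  obtain ⟨T, hT, hTsrc⟩ := exists_source_scc G.verts (Ek G k) hsrcW hvertsne
  obtain ⟨S, hS, hSne⟩ : ∃ S ∈ SCCs G.verts (Ek G k), S ≠ T := by
    by_cases h : S1 = T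
    · exact ⟨S2, hS2, fun h2 => hS12 (h.trans h2.symm)⟩
    · exact ⟨S1, hS1, h⟩
  have hS' := hS
  obtain ⟨v, hvW, rfl⟩ := hS
  have hvS : v ∈ {u | u ∈ G.verts ∧ Reach (Ek G k) v u ∧ Reach (Ek G k) u v} :=
    mem_own_scc hvW
  have hvT : v ∉ T := fun h => hSne (scc_eq_of_mem hS' hT hvS h)
  -- player 1 can always escape T
  have key : ∀ x, x ∈ G.verts → x ∉ T → x ∉ G.V0 → (∃ u, (x, u) ∈ G.E) →
      ∃ u, (x, u) ∈ G.E ∧ u ∉ T := by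
    rintro x hxW hxT hxV0 ⟨u0, hu0⟩
    by_contra hcon
    push_neg at hcon
    have hall : ∀ u, (x, u) ∈ G.E → u ∈ T := hcon
    by_cases hxU : x ∈ Uk G k
    · have hF : x ∈ Force G.E (Uk G k) T := ⟨⟨⟨⟨u0, hall _ hu0, hu0⟩, hxT⟩, hxU⟩, hall⟩
      have hFk : x ∈ Fk G (k+1) := by
        rw [Fk_succ_eq]; exact Set.mem_biUnion hT hF
      have hmem : (x, u0) ∈ Ek G (k+1) := Or.inr ⟨hu0, hFk⟩
      rw [← hEq] at hmem
      rcases Ek_src G k hmem with h | h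
      · exact hxV0 h
      · exact h hxU
    · exact hxT (hTsrc x u0 (mem_Ek_of_not_Uk G hxW hu0 k hxU) (hall _ hu0))
  obtain ⟨s, hs1, hs2⟩ := hfc v hvW
  haveI : Nonempty V := ⟨v⟩
  have inv : ∀ n, (playP G s T v n).1 = prefixUpTo (fun m => (playP G s T v m).2) n ∧
      Hist G s v (playP G s T v n).1 ∧ (playP G s T v n).2 ∈ G.verts ∧
      (playP G s T v n).2 ∉ T ∧ ∃ h, (playP G s T v n).1 = h ++ [(playP G s T v n).2] := by
    intro n
    induction n with
    | zero =>
      refine ⟨?_, Hist.base, hvW, hvT, [], rfl⟩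
      simp [playP, prefixUpTo]
    | succ n ih =>
      obtain ⟨hpre, hhist, hW', hT', h, hform⟩ := ih
      have hhist' : Hist G s v (h ++ [(playP G s T v n).2]) := by rw [← hform]; exact hhist
      have hleg := hs1 h (playP G s T v n).2 hhist'
      by_cases hv0 : (playP G s T v n).2 ∈ G.V0
      · have hedge : ((playP G s T v n).2, s ((playP G s T v n).1)) ∈ G.E := by
          rw [hform]; exact hleg.1 hv0
        have hstep : (playP G s T v (n+1)).2 = s ((playP G s T v n).1) := by
          simp only [playP, if_pos hv0]
        have hlist : (playP G s T v (n+1)).1 =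
            (playP G s T v n).1 ++ [s ((playP G s T v n).1)] := by
          simp only [playP, if_pos hv0]
        have hEk : ((playP G s T v n).2, s ((playP G s T v n).1)) ∈ Ek G k :=
          mem_Ek_of_V0 G hv0 hedge k
        have hnotT : s ((playP G s T v n).1) ∉ T :=
          fun hmem => hT' (hTsrc _ _ hEk hmem)
        refine ⟨?_, ?_, ?_, ?_, ?_⟩
        · rw [hlist, prefixUpTo_succ, ← hpre, hstep]
        · rw [hlist, hform]
          exact Hist.move0 h _ hhist' hv0 (hleg.1 hv0)
        · rw [hstep]; exact htgtW hedge
        · rw [hstep]; exact hnotT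
        · exact ⟨(playP G s T v n).1, by rw [hlist, hstep]⟩
      · have hv1 : (playP G s T v n).2 ∈ G.V1 := hW'.resolve_left hv0
        have hex := hleg.2 hv1
        have hspec := Classical.epsilon_spec (key _ hW' hT' hv0 hex)
        set y := Classical.epsilon
          (fun u => ((playP G s T v n).2, u) ∈ G.E ∧ u ∉ T) with hy
        have hstep : (playP G s T v (n+1)).2 = y := by
          simp only [playP, if_neg hv0, hy]
        have hlist : (playP G s T v (n+1)).1 = (playP G s T v n).1 ++ [y] := by
          simp only [playP, if_neg hv0, hy]
        refine ⟨?_, ?_, ?_, ?_, ?_⟩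
        · rw [hlist, prefixUpTo_succ, ← hpre, hstep]
        · rw [hlist, hform]
          exact Hist.move1 h _ y hhist' hv1 hspec.1
        · rw [hstep]; exact htgtW hspec.1
        · rw [hstep]; exact hspec.2
        · exact ⟨(playP G s T v n).1, by rw [hlist, hstep]⟩
  have hplay : InfPlay G s v (fun m => (playP G s T v m).2) := by
    intro n; rw [← (inv n).1]; exact (inv n).2.1
  have hinf := hs2 _ hplay
  obtain ⟨u0, hu0W, hTeq⟩ := hT
  have htT : u0 ∈ T := by rw [hTeq]; exact mem_own_scc hu0W
  have hio : u0 ∈ InfSet (fun m => (playP G s T v m).2) := by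
    rw [hinf]; exact hu0W
  obtain ⟨n, _, hn⟩ := hio 0
  have hn' : (playP G s T v n).2 = u0 := hn
  exact (inv n).2.2.2.1 (hn'.symm ▸ htT)

end Games
end

section
/- Let G=(V0,V1,E) be a connectivity game with derivative sequence (G_k)_{k≥0}. For every k≥0, every strongly connected component of G_k is a forced trap in G_k (with respect to the edge relation E_k). -/
namespace Games

universe u

variable {V : Type u}

section SCCs

variable {W : Set V} {E : Set (V × V)} {S : Set V}

lemma reach_of_mem_SCCs (hS : S ∈ SCCs W E) {a b : V} (ha : a ∈ S) (hb : b ∈ S) :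
    Reach E a b := by
  obtain ⟨v, -, rfl⟩ := hS
  exact ha.2.2.trans hb.2.1

lemma SCCs_subset (hS : S ∈ SCCs W E) : S ⊆ W := by
  obtain ⟨v, -, rfl⟩ := hS
  exact fun u hu => hu.1

lemma nonempty_of_mem_SCCs (hS : S ∈ SCCs W E) : S.Nonempty := by
  obtain ⟨v, hv, rfl⟩ := hS
  exact ⟨v, hv, .refl, .refl⟩

lemma mem_SCCs_of_reach (hS : S ∈ SCCs W E)
    {w u : V} (hw : w ∈ S) (hu : u ∈ W) (hwu : Reach E w u) (huw : Reach E u w) : u ∈ S := by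
  obtain ⟨v, -, rfl⟩ := hS
  exact ⟨hu, hw.2.1.trans hwu, huw.trans hw.2.2⟩

lemma reachWithin_of_mem_SCCs (hE : ∀ x y, (x, y) ∈ E → y ∈ W) (hS : S ∈ SCCs W E)
    {a b : V} (ha : a ∈ S) (hb : b ∈ S) : ReachWithin E S a b := by
  induction reach_of_mem_SCCs hS ha hb using Relation.ReflTransGen.head_induction_on with
  | refl => exact .refl
  | @head a c hac hcb ih =>
      have hc : c ∈ S := mem_SCCs_of_reach hS ha (hE a c hac) (.single hac)
        (hcb.trans (reach_of_mem_SCCs hS hb ha))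
      exact .head ⟨hac, ha, hc⟩ (ih hc)

lemma exists_edge_reach_of_mem_SCCs (hS : S ∈ SCCs W E) (hnt : S.Nontrivial) {w : V}
    (hw : w ∈ S) :
    ∃ c, (w, c) ∈ E ∧ Reach E c w := by
  obtain ⟨x, hx, hxw⟩ := hnt.exists_ne w
  rcases (reach_of_mem_SCCs hS hw hx).cases_head with rfl | ⟨c, hwc, hcx⟩
  · exact absurd rfl hxw
  · exact ⟨c, hwc, hcx.trans (reach_of_mem_SCCs hS hx hw)⟩

/-- The out-edge of `w` that keeps it inside `S` lands in `T`, and `T` is strongly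
connected, so every successor of `w` reaches back to `w`. -/
lemma mem_SCCs_of_succ_subset {T : Set V} (hS : S ∈ SCCs W E) (hnt : S.Nontrivial) (hTW : T ⊆ W)
    (hT : ∀ a ∈ T, ∀ b ∈ T, Reach E a b) {w : V} (hw : w ∈ S)
    (hwT : ∀ u, (w, u) ∈ E → u ∈ T) {u : V} (hwu : (w, u) ∈ E) : u ∈ S := by
  obtain ⟨c, hwc, hcw⟩ := exists_edge_reach_of_mem_SCCs hS hnt hw
  have huT := hwT u hwu
  exact mem_SCCs_of_reach hS hw (hTW huT) (.single hwu)
    ((hT u huT c (hwT c hwc)).trans hcw)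

end SCCs

namespace ConnGame

variable (G : ConnGame V)

lemma Ek_succ (k : ℕ) :
    Ek G (k + 1) = Ek G k ∪
      {e | e ∈ G.E ∧ e.1 ∈ ⋃ S ∈ SCCs G.verts (Ek G k), Force G.E (Uk G k) S} := rfl

lemma Ek_subset_E (k : ℕ) : Ek G k ⊆ G.E := by
  induction k with
  | zero => exact fun e he => he.1
  | succ k ih => exact Set.union_subset ih fun e he => he.1

lemma Ek_mono : Monotone (Ek G) :=
  monotone_nat_of_le_succ fun k => (Ek_succ G k).symm ▸ Set.subset_union_left

lemma exists_Force_of_V1_edge (hdisj : Disjoint G.V0 G.V1) {k : ℕ} {w u : V}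
    (hw : w ∈ G.V1) (hwu : (w, u) ∈ Ek G k) :
    ∃ j < k, ∃ S ∈ SCCs G.verts (Ek G j), w ∈ Force G.E (Uk G j) S := by
  induction k with
  | zero => exact absurd hw (Set.disjoint_left.mp hdisj hwu.2)
  | succ k ih =>
      rcases hwu with h | h
      · obtain ⟨j, hj, hF⟩ := ih h
        exact ⟨j, hj.trans k.lt_succ_self, hF⟩
      · obtain ⟨S, hS, hwF⟩ := Set.mem_iUnion₂.mp h.2
        exact ⟨k, k.lt_succ_self, S, hS, hwF⟩

lemma mem_verts_of_mem_E (hE : G.E ⊆ (G.V0 ×ˢ G.V1) ∪ (G.V1 ×ˢ G.V0)) {x y : V}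
    (hxy : (x, y) ∈ G.E) : y ∈ G.verts := by
  rcases hE hxy with h | h
  exacts [Or.inr h.2, Or.inl h.2]

end ConnGame

theorem stmt2_general (G : ConnGame V)
    (hdisj : Disjoint G.V0 G.V1)
    (hEsub : G.E ⊆ (G.V0 ×ˢ G.V1) ∪ (G.V1 ×ˢ G.V0)) :
    ∀ k : ℕ, ∀ S ∈ SCCs G.verts (Ek G k), IsFT G.V1 (Ek G k) S := by
  intro k S hS
  rcases S.subsingleton_or_nontrivial with hsub | hnt
  · obtain ⟨v, hv⟩ := nonempty_of_mem_SCCs hS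
    exact Or.inl ⟨v, hsub.eq_singleton_of_mem hv⟩
  refine Or.inr ⟨hnt, ?_, fun a ha b hb => reachWithin_of_mem_SCCs
    (fun x y hxy => G.mem_verts_of_mem_E hEsub (G.Ek_subset_E k hxy)) hS ha hb⟩
  rintro w ⟨hwS, hwV1⟩ u hwu
  -- `w` was forced into some SCC `S'` of an earlier `G_j`, which stays strongly connected in `G_k`.
  obtain ⟨j, hjk, S', hS', hwF⟩ := G.exists_Force_of_V1_edge hdisj hwV1 hwu
  exact mem_SCCs_of_succ_subset hS hnt (SCCs_subset hS')
    (fun a ha b hb => Relation.ReflTransGen.mono (fun x y hxy => G.Ek_mono hjk.le hxy) _ _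
      (reach_of_mem_SCCs hS' ha hb))
    hwS (fun u hu => hwF.2 u (G.Ek_subset_E k hu)) hwu

/-- For every `k ≥ 0`, every strongly connected component of the
`k`-th derivative `G_k` is a forced trap in `G_k` (w.r.t. the edge set `E_k`). -/
theorem stmt2 [Fintype V] (G : ConnGame V)
    (hdisj : Disjoint G.V0 G.V1)
    (hEsub : G.E ⊆ (G.V0 ×ˢ G.V1) ∪ (G.V1 ×ˢ G.V0)) :
    ∀ k : ℕ, ∀ S ∈ SCCs G.verts (Ek G k), IsFT G.V1 (Ek G k) S :=
  stmt2_general G hdisj hEsub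

end Games
end

section
/- Let G=(V0,V1,E) be a connectivity game, (G'_k)_{k≥0} its simplified derivative sequence and (G''_k)_{k≥0} its reduced derivative sequence, where the same outgoing edge is chosen for each forced vertex in both constructions (T'_k=T''_k). Then for all k≥0 and all v,u∈V0, there is a directed path from v to u in G'_k if and only if there is a directed path from v to u in G''_k. -/
namespace Games

universe u

variable {V : Type u}

section Stmt8Aux

variable {G : ConnGame V} {c : V → V}

lemma edge_cases (hdisj : Disjoint G.V0 G.V1)
    (hEsub : G.E ⊆ (G.V0 ×ˢ G.V1) ∪ (G.V1 ×ˢ G.V0)) {x y : V}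
    (h : (x, y) ∈ G.E) :
    (x ∈ G.V0 ∧ y ∈ G.V1) ∨ (x ∈ G.V1 ∧ y ∈ G.V0) := by
  rcases hEsub h with h' | h'
  · exact Or.inl ⟨h'.1, h'.2⟩
  · exact Or.inr ⟨h'.1, h'.2⟩

/-- Reachability between `V0` vertices is the same in the simplified and reduced graphs. -/
lemma reach_equiv (hdisj : Disjoint G.V0 G.V1)
    (hEsub : G.E ⊆ (G.V0 ×ˢ G.V1) ∪ (G.V1 ×ˢ G.V0))
    {W : Set V} (hW : W ⊆ G.V1) (hWc : ∀ f ∈ W, (f, c f) ∈ G.E)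
    {v u : V} (hv : v ∈ G.V0) (hu : u ∈ G.V0) :
    Reach ({e | e ∈ G.E ∧ e.1 ∈ G.V0} ∪ {e | ∃ f ∈ W, e = (f, c f)}) v u ↔
      Reach {e | ∃ f ∈ W, (e.1, f) ∈ G.E ∧ e.2 = c f} v u := by
  set E' : Set (V × V) := {e | e ∈ G.E ∧ e.1 ∈ G.V0} ∪ {e | ∃ f ∈ W, e = (f, c f)} with hE'
  set E'' : Set (V × V) := {e | ∃ f ∈ W, (e.1, f) ∈ G.E ∧ e.2 = c f} with hE''
  constructor
  · intro h
    suffices H : (v ∈ G.V0 → Reach E'' v u) ∧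
        (v ∈ G.V1 → ∀ x, (x, v) ∈ G.E → Reach E'' x u) from H.1 hv
    clear hv
    induction h using Relation.ReflTransGen.head_induction_on with
    | refl =>
      refine ⟨fun _ => Relation.ReflTransGen.refl, fun h1 => ?_⟩
      exact absurd h1 (Set.disjoint_left.mp hdisj hu)
    | head hab hbu ih =>
      rename_i a b
      rcases hab with ⟨habE, haV0⟩ | ⟨f, hfW, hfe⟩
      · refine ⟨fun _ => ?_, fun h1 => absurd h1 (Set.disjoint_left.mp hdisj haV0)⟩
        have hb1 : b ∈ G.V1 := by
          rcases edge_cases hdisj hEsub habE with ⟨_, h2⟩ | ⟨h1, _⟩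
          · exact h2
          · exact absurd h1 (Set.disjoint_left.mp hdisj haV0)
        exact ih.2 hb1 a habE
      · obtain ⟨ha, hb⟩ : a = f ∧ b = c f := Prod.mk.injEq .. ▸ Prod.ext_iff.mp hfe
        subst ha; subst hb
        have haE : (a, c a) ∈ G.E := hWc a hfW
        have ha1 : a ∈ G.V1 := hW hfW
        have hca0 : c a ∈ G.V0 := by
          rcases edge_cases hdisj hEsub haE with ⟨h1, _⟩ | ⟨_, h2⟩
          · exact absurd ha1 (Set.disjoint_left.mp hdisj h1)
          · exact h2
        refine ⟨fun h0 => absurd ha1 (Set.disjoint_left.mp hdisj h0), fun _ x hxa => ?_⟩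
        exact Relation.ReflTransGen.head ⟨a, hfW, hxa, rfl⟩ (ih.1 hca0)
  · intro h
    induction h with
    | refl => exact Relation.ReflTransGen.refl
    | tail hxy hstep ih =>
      rename_i y z
      obtain ⟨f, hfW, hyf, hz⟩ := hstep
      have hy0 : y ∈ G.V0 := by
        rcases edge_cases hdisj hEsub hyf with ⟨h1, _⟩ | ⟨_, h2⟩
        · exact h1
        · exact absurd (hW hfW) (Set.disjoint_left.mp hdisj h2)
      have h1 : (y, f) ∈ E' := Or.inl ⟨hyf, hy0⟩
      have hz' : z = c f := hz
      have h2 : (f, z) ∈ E' := Or.inr ⟨f, hfW, by rw [hz']⟩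
      exact ((ih hy0).tail h1).tail h2

/-- The union of forced sets over SCCs agrees for the two graphs. -/
lemma force_union_eq (hdisj : Disjoint G.V0 G.V1)
    (hEsub : G.E ⊆ (G.V0 ×ˢ G.V1) ∪ (G.V1 ×ˢ G.V0))
    {U : Set V} (hU : U ⊆ G.V1) {E' E'' : Set (V × V)}
    (hnoout : ∀ v ∈ U, ∀ y, (v, y) ∉ E')
    (hRE : ∀ v ∈ G.V0, ∀ u ∈ G.V0, (Reach E' v u ↔ Reach E'' v u)) :
    (⋃ S ∈ SCCs G.verts E', Force G.E U S) = ⋃ S ∈ SCCs G.V0 E'', Force G.E U S := by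
  ext v
  simp only [Set.mem_iUnion, exists_prop]
  constructor
  · rintro ⟨S, ⟨w, hw, rfl⟩, hvF⟩
    obtain ⟨⟨⟨s, hsS, hvs⟩, hvnS⟩, hvU⟩ := hvF.1
    have hv1 : v ∈ G.V1 := hU hvU
    have hs0 : s ∈ G.V0 := by
      rcases edge_cases hdisj hEsub hvs with ⟨h1, _⟩ | ⟨_, h2⟩
      · exact absurd hv1 (Set.disjoint_left.mp hdisj h1)
      · exact h2
    obtain ⟨hsverts, hws, hsw⟩ := hsS
    refine ⟨{u | u ∈ G.V0 ∧ Reach E'' s u ∧ Reach E'' u s}, ⟨s, hs0, rfl⟩, ?_⟩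
    have hmem : ∀ x, (v, x) ∈ G.E → x ∈ {u | u ∈ G.V0 ∧ Reach E'' s u ∧ Reach E'' u s} := by
      intro x hvx
      obtain ⟨hxverts, hwx, hxw⟩ := hvF.2 x hvx
      have hx0 : x ∈ G.V0 := by
        rcases edge_cases hdisj hEsub hvx with ⟨h1, _⟩ | ⟨_, h2⟩
        · exact absurd hv1 (Set.disjoint_left.mp hdisj h1)
        · exact h2
      exact ⟨hx0, (hRE s hs0 x hx0).1 (hsw.trans hwx),
        (hRE x hx0 s hs0).1 (hxw.trans hws)⟩
    refine ⟨⟨⟨⟨s, ⟨hs0, Relation.ReflTransGen.refl, Relation.ReflTransGen.refl⟩, hvs⟩, ?_⟩,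
      hvU⟩, hmem⟩
    intro hvS
    exact absurd hv1 (Set.disjoint_left.mp hdisj hvS.1)
  · rintro ⟨S, ⟨w, hw, rfl⟩, hvF⟩
    obtain ⟨⟨⟨s, hsS, hvs⟩, hvnS⟩, hvU⟩ := hvF.1
    have hv1 : v ∈ G.V1 := hU hvU
    obtain ⟨hs0, hws, hsw⟩ := hsS
    have hsverts : s ∈ G.verts := Or.inl hs0
    refine ⟨{u | u ∈ G.verts ∧ Reach E' s u ∧ Reach E' u s}, ⟨s, hsverts, rfl⟩, ?_⟩
    have hmem : ∀ x, (v, x) ∈ G.E → x ∈ {u | u ∈ G.verts ∧ Reach E' s u ∧ Reach E' u s} := by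
      intro x hvx
      obtain ⟨hx0, hwx, hxw⟩ := hvF.2 x hvx
      exact ⟨Or.inl hx0, (hRE s hs0 x hx0).2 (hsw.trans hwx),
        (hRE x hx0 s hs0).2 (hxw.trans hws)⟩
    refine ⟨⟨⟨⟨s, ⟨hsverts, Relation.ReflTransGen.refl, Relation.ReflTransGen.refl⟩, hvs⟩, ?_⟩,
      hvU⟩, hmem⟩
    rintro ⟨-, -, hvsR⟩
    rcases Relation.ReflTransGen.cases_head hvsR with rfl | ⟨b, hvb, -⟩
    · exact absurd hv1 (Set.disjoint_left.mp hdisj hs0)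
    · exact hnoout v hvU b hvb

/-- The main invariant relating the simplified and reduced derivative sequences. -/
lemma main_inv (G : ConnGame V) (c : V → V)
    (hdisj : Disjoint G.V0 G.V1)
    (hEsub : G.E ⊆ (G.V0 ×ˢ G.V1) ∪ (G.V1 ×ˢ G.V0))
    (hc : ∀ v : V, (∃ u, (v, u) ∈ G.E) → (v, c v) ∈ G.E) : ∀ k : ℕ,
    (deriv' G c k).2.1 = (deriv'' G c k).2.1 ∧
    (deriv' G c k).2.1 ⊆ G.V1 ∧
    (∀ f ∈ G.V1 \ (deriv' G c k).2.1, (f, c f) ∈ G.E) ∧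
    (deriv' G c k).1 =
      {e | e ∈ G.E ∧ e.1 ∈ G.V0} ∪ {e | ∃ f ∈ G.V1 \ (deriv' G c k).2.1, e = (f, c f)} ∧
    (deriv'' G c k).1 =
      {e | ∃ f ∈ G.V1 \ (deriv' G c k).2.1, (e.1, f) ∈ G.E ∧ e.2 = c f} := by
  intro k
  induction k with
  | zero =>
    refine ⟨rfl, le_refl _, fun f hf => absurd hf.1 hf.2, ?_, ?_⟩
    · simp [deriv']
    · ext e
      simp only [deriv'', deriv', Set.mem_empty_iff_false, Set.mem_setOf_eq, false_iff]
      rintro ⟨f, ⟨hf1, hf2⟩, -⟩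
      exact hf2 hf1
  | succ k ih =>
    obtain ⟨hUeq, hU1, hWc, hE', hE''⟩ := ih
    set U : Set V := (deriv' G c k).2.1 with hUdef
    set F : Set V := ⋃ S ∈ SCCs G.verts (deriv' G c k).1, Force G.E U S with hFdef
    set F'' : Set V := ⋃ S ∈ SCCs G.V0 (deriv'' G c k).1, Force G.E (deriv'' G c k).2.1 S
      with hF''def
    have hnoout : ∀ v ∈ U, ∀ y, (v, y) ∉ (deriv' G c k).1 := by
      intro v hvU y hvy
      rw [hE'] at hvy
      rcases hvy with ⟨_, hv0⟩ | ⟨f, hf, hfe⟩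
      · exact absurd (hU1 hvU) (Set.disjoint_left.mp hdisj hv0)
      · have : v = f := (Prod.ext_iff.mp hfe).1
        exact hf.2 (this ▸ hvU)
    have hRE : ∀ v ∈ G.V0, ∀ u ∈ G.V0,
        (Reach (deriv' G c k).1 v u ↔ Reach (deriv'' G c k).1 v u) := by
      intro v hv u hu
      rw [hE', hE'']
      exact reach_equiv hdisj hEsub (Set.diff_subset) hWc hv hu
    have hFeq : F = F'' := by
      rw [hFdef, hF''def, ← hUeq]
      exact force_union_eq hdisj hEsub hU1 hnoout hRE
    have hFU : F ⊆ U := by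
      intro v hv
      simp only [hFdef, Set.mem_iUnion, exists_prop] at hv
      obtain ⟨S, _, hvF⟩ := hv
      exact hvF.1.2
    have hFE : ∀ f ∈ F, (f, c f) ∈ G.E := by
      intro f hf
      simp only [hFdef, Set.mem_iUnion, exists_prop] at hf
      obtain ⟨S, _, hvF⟩ := hf
      obtain ⟨s, _, hfs⟩ := hvF.1.1.1
      exact hc f ⟨s, hfs⟩
    have hd1 : deriv' G c (k + 1) =
        ((deriv' G c k).1 ∪ {e | ∃ f ∈ F, e = (f, c f)}, U \ F, F) := rfl
    have hd2 : deriv'' G c (k + 1) =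
        ((deriv'' G c k).1 ∪ {e | ∃ f ∈ F'', (e.1, f) ∈ G.E ∧ e.2 = c f},
          (deriv'' G c k).2.1 \ F'', F'') := rfl
    have hWnew : G.V1 \ (U \ F) = (G.V1 \ U) ∪ F := by
      rw [Set.diff_diff_right, Set.inter_eq_right.mpr (hFU.trans hU1)]
    refine ⟨?_, ?_, ?_, ?_, ?_⟩
    · rw [hd1, hd2, ← hUeq, hFeq]
    · rw [hd1]
      exact (Set.diff_subset).trans hU1
    · rw [hd1]
      simp only
      rw [hWnew]
      rintro f (hf | hf)
      · exact hWc f hf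
      · exact hFE f hf
    · rw [hd1]
      simp only
      rw [hWnew, hE']
      ext e
      simp only [Set.mem_union, Set.mem_setOf_eq, Set.mem_diff]
      constructor
      · rintro ((h | ⟨f, hf, he⟩) | ⟨f, hf, he⟩)
        · exact Or.inl h
        · exact Or.inr ⟨f, Or.inl hf, he⟩
        · exact Or.inr ⟨f, Or.inr hf, he⟩
      · rintro (h | ⟨f, hf | hf, he⟩)
        · exact Or.inl (Or.inl h)
        · exact Or.inl (Or.inr ⟨f, hf, he⟩)
        · exact Or.inr ⟨f, hf, he⟩
    · rw [hd1, hd2]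
      simp only
      rw [hWnew, hE'', ← hFeq]
      ext e
      simp only [Set.mem_union, Set.mem_setOf_eq, Set.mem_diff]
      constructor
      · rintro (⟨f, hf, he⟩ | ⟨f, hf, he⟩)
        · exact ⟨f, Or.inl hf, he⟩
        · exact ⟨f, Or.inr hf, he⟩
      · rintro ⟨f, hf | hf, he⟩
        · exact Or.inl ⟨f, hf, he⟩
        · exact Or.inr ⟨f, hf, he⟩

end Stmt8Aux

/-- With the same outgoing edge chosen for each forced vertex in both
constructions, for all `k ≥ 0` and all `v, u ∈ V0`, there is a directed path from `v`
to `u` in the simplified derivative `G'_k` iff there is one in the reduced derivative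
`G''_k`. -/
theorem stmt8 [Fintype V] (G : ConnGame V)
    (hdisj : Disjoint G.V0 G.V1)
    (hEsub : G.E ⊆ (G.V0 ×ˢ G.V1) ∪ (G.V1 ×ˢ G.V0))
    (c : V → V) (hc : ∀ v : V, (∃ u, (v, u) ∈ G.E) → (v, c v) ∈ G.E) :
    ∀ k : ℕ, ∀ v ∈ G.V0, ∀ u ∈ G.V0,
      (Reach (Ek' G c k) v u ↔ Reach (Ek'' G c k) v u) := by
  intro k v hv u hu
  obtain ⟨hUeq, hU1, hWc, hE', hE''⟩ := main_inv G c hdisj hEsub hc k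
  rw [Ek', Ek'', hE', hE'']
  exact reach_equiv hdisj hEsub (Set.diff_subset) hWc hv hu
end Games
end

section
/- Let G=(V0,V1,E) be a connectivity game with simplified derivative sequence (G'_k) and reduced derivative sequence (G''_k) (with matching edge choices T'_k=T''_k), and stabilization point s. Then G'_s is strongly connected if and only if both G''_s and G are strongly connected. -/
namespace Games

universe u

variable {V : Type u}

/-! Both derivative sequences are driven by the set `A` of vertices forced so far: `E'_k` is
made of the `V0`-edges of `G` and one chosen edge `f → c f` per `f ∈ A`, while `E''_k` short-cuts
each path `x → f → c f` with `f ∈ A`. As `G` is bipartite, the paths of `G'_k` between vertices of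
`V0` are exactly the expansions of the paths of `G''_k`, so both sequences see the same components
on `V0` and force the same vertices. At the stabilization point nothing more is forced; if `G''_s`
is strongly connected then `V0` is one component, so every vertex of `V1` with an outgoing edge
has been forced, and paths of `G''_s` and single edges of `G` assemble into paths of `G'_s`. -/

namespace ConnGame

structure IsBipartite (G : ConnGame V) : Prop where
  disjoint : Disjoint G.V0 G.V1
  edge_subset : G.E ⊆ G.V0 ×ˢ G.V1 ∪ G.V1 ×ˢ G.V0

namespace IsBipartite

variable {G : ConnGame V} {u v : V}

lemma notMem_V1 (hG : G.IsBipartite) (hv : v ∈ G.V0) : v ∉ G.V1 :=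
  Set.disjoint_left.mp hG.disjoint hv

lemma snd_mem_V1 (hG : G.IsBipartite) (he : (v, u) ∈ G.E) (hv : v ∈ G.V0) : u ∈ G.V1 := by
  rcases hG.edge_subset he with h | h
  · exact h.2
  · exact absurd h.1 (hG.notMem_V1 hv)

lemma snd_mem_V0 (hG : G.IsBipartite) (he : (v, u) ∈ G.E) (hv : v ∈ G.V1) : u ∈ G.V0 := by
  rcases hG.edge_subset he with h | h
  · exact absurd hv (hG.notMem_V1 h.1)
  · exact h.2

lemma fst_mem_V0 (hG : G.IsBipartite) (he : (v, u) ∈ G.E) (hu : u ∈ G.V1) : v ∈ G.V0 := by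
  rcases hG.edge_subset he with h | h
  · exact h.1
  · exact absurd hu (hG.notMem_V1 h.2)

end IsBipartite

end ConnGame

lemma StronglyConnected.exists_out_edge {W : Set V} {E : Set (V × V)}
    (h : StronglyConnected W E) (hW : W.Nontrivial) {v : V} (hv : v ∈ W) :
    ∃ z, (v, z) ∈ E := by
  obtain ⟨w, hw, hwv⟩ := hW.exists_ne v
  rcases (h v hv w hw).cases_head with rfl | ⟨z, hz, -⟩
  · exact absurd rfl hwv
  · exact ⟨z, hz⟩

lemma StronglyConnected.exists_in_edge {W : Set V} {E : Set (V × V)}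
    (h : StronglyConnected W E) (hW : W.Nontrivial) {v : V} (hv : v ∈ W) :
    ∃ z, (z, v) ∈ E := by
  obtain ⟨w, hw, hwv⟩ := hW.exists_ne v
  rcases (h w hw v hv).cases_tail with rfl | ⟨z, -, hz⟩
  · exact absurd rfl hwv
  · exact ⟨z, hz⟩

/-- The edges of `G'_k` once the vertices of `A` have been forced. -/
def simplifiedEdges (G : ConnGame V) (c : V → V) (A : Set V) : Set (V × V) :=
  {e | e ∈ G.E ∧ e.1 ∈ G.V0} ∪ {e | ∃ f ∈ A, e = (f, c f)}

/-- The edges of `G''_k` once the vertices of `A` have been forced. -/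
def reducedEdges (G : ConnGame V) (c : V → V) (A : Set V) : Set (V × V) :=
  {e | ∃ f ∈ A, (e.1, f) ∈ G.E ∧ e.2 = c f}

lemma simplifiedEdges_union (G : ConnGame V) (c : V → V) (A B : Set V) :
    simplifiedEdges G c (A ∪ B) = simplifiedEdges G c A ∪ {e | ∃ f ∈ B, e = (f, c f)} := by
  ext e
  simp only [simplifiedEdges, Set.mem_union, Set.mem_ofPred_eq, or_and_right, exists_or, or_assoc]

lemma reducedEdges_union (G : ConnGame V) (c : V → V) (A B : Set V) :
    reducedEdges G c (A ∪ B) = reducedEdges G c A ∪ reducedEdges G c B := by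
  ext e
  simp only [reducedEdges, Set.mem_union, Set.mem_ofPred_eq, or_and_right, exists_or]

lemma simplifiedEdges_subset (G : ConnGame V) {c : V → V} {A : Set V}
    (hAc : ∀ f ∈ A, (f, c f) ∈ G.E) : simplifiedEdges G c A ⊆ G.E := by
  rintro e (⟨he, -⟩ | ⟨f, hf, rfl⟩)
  · exact he
  · exact hAc f hf

section Reach

variable {G : ConnGame V} {c : V → V} {A : Set V}

lemma eq_of_reach_simplifiedEdges (hG : G.IsBipartite) {v w : V} (hv : v ∈ G.V1)
    (hvA : v ∉ A) (h : Reach (simplifiedEdges G c A) v w) : w = v := by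
  rcases h.cases_head with rfl | ⟨z, ⟨-, hv0⟩ | ⟨f, hf, hvz⟩, -⟩
  · rfl
  · exact absurd hv (hG.notMem_V1 hv0)
  · obtain ⟨rfl, -⟩ := Prod.mk_inj.mp hvz
    exact absurd hf hvA

lemma reach_reducedEdges_of_reach_simplifiedEdges (hG : G.IsBipartite) (hA1 : A ⊆ G.V1)
    (hAc : ∀ f ∈ A, (f, c f) ∈ G.E) {x y : V} (hy : y ∈ G.V0)
    (h : Reach (simplifiedEdges G c A) x y) :
    (x ∈ G.V0 → Reach (reducedEdges G c A) x y) ∧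
      (x ∈ G.V1 → x ∈ A ∧ Reach (reducedEdges G c A) (c x) y) := by
  induction h using Relation.ReflTransGen.head_induction_on with
  | refl => exact ⟨fun _ => .refl, fun hy1 => absurd hy1 (hG.notMem_V1 hy)⟩
  | @head a b hab _ ih =>
    rcases hab with ⟨habE, ha0⟩ | ⟨f, hf, hab⟩
    · obtain ⟨hbA, hbc⟩ := ih.2 (hG.snd_mem_V1 habE ha0)
      exact ⟨fun _ => .head ⟨b, hbA, habE, rfl⟩ hbc, fun ha1 => absurd ha1 (hG.notMem_V1 ha0)⟩
    · obtain ⟨rfl, rfl⟩ := Prod.mk_inj.mp hab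
      refine ⟨fun ha0 => absurd (hA1 hf) (hG.notMem_V1 ha0), fun _ => ⟨hf, ih.1 ?_⟩⟩
      exact hG.snd_mem_V0 (hAc _ hf) (hA1 hf)

lemma reach_reducedEdges_iff (hG : G.IsBipartite) (hA1 : A ⊆ G.V1)
    (hAc : ∀ f ∈ A, (f, c f) ∈ G.E) {x y : V} (hx : x ∈ G.V0) (hy : y ∈ G.V0) :
    Reach (reducedEdges G c A) x y ↔ Reach (simplifiedEdges G c A) x y := by
  refine ⟨fun h => ?_, fun h => (reach_reducedEdges_of_reach_simplifiedEdges hG hA1 hAc hy h).1 hx⟩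
  clear hy
  induction h with
  | refl => exact .refl
  | tail _ he ih =>
    obtain ⟨f, hf, hbf, rfl⟩ := he
    exact (ih.tail (Or.inl ⟨hbf, hG.fst_mem_V0 hbf (hA1 hf)⟩)).tail (Or.inr ⟨f, hf, rfl⟩)

end Reach

lemma StronglyConnected.mem_SCCs {W : Set V} {E : Set (V × V)} (h : StronglyConnected W E)
    {w : V} (hw : w ∈ W) : W ∈ SCCs W E :=
  ⟨w, hw, Set.ext fun u => ⟨fun hu => ⟨hu, h w hw u hu, h u hu w hw⟩, fun hu => hu.1⟩⟩

section Force

variable {G : ConnGame V} {c : V → V} {A : Set V}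

/-- Both derivatives force the same vertices: a vertex of `V1` only has successors in `V0`,
where the two graphs have the same components, and an unforced one is alone in its component
of `G'_k`. -/
lemma biUnion_force_simplifiedEdges_eq (hG : G.IsBipartite) (hA1 : A ⊆ G.V1)
    (hAc : ∀ f ∈ A, (f, c f) ∈ G.E) :
    ⋃ S ∈ SCCs G.verts (simplifiedEdges G c A), Force G.E (G.V1 \ A) S =
      ⋃ S ∈ SCCs G.V0 (reducedEdges G c A), Force G.E (G.V1 \ A) S := by
  have hreach {x y : V} (hx : x ∈ G.V0) (hy : y ∈ G.V0) :=
    reach_reducedEdges_iff hG hA1 hAc (c := c) hx hy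
  ext v
  simp only [Set.mem_iUnion, exists_prop]
  constructor
  · rintro ⟨S, ⟨w, -, rfl⟩, ⟨⟨⟨s, ⟨-, hws, hsw⟩, hvs⟩, -⟩, hvU⟩, hsucc⟩
    have hs0 := hG.snd_mem_V0 hvs hvU.1
    refine ⟨_, ⟨s, hs0, rfl⟩,
      ⟨⟨⟨s, ⟨hs0, .refl, .refl⟩, hvs⟩, fun hv => hG.notMem_V1 hv.1 hvU.1⟩, hvU⟩, fun u hvu => ?_⟩
    have hu0 := hG.snd_mem_V0 hvu hvU.1
    obtain ⟨-, hwu, huw⟩ := hsucc u hvu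
    exact ⟨hu0, (hreach hs0 hu0).2 (hsw.trans hwu), (hreach hu0 hs0).2 (huw.trans hws)⟩
  · rintro ⟨T, ⟨w, hw, rfl⟩, ⟨⟨⟨s, ⟨hs0, hws, hsw⟩, hvs⟩, -⟩, hvU⟩, hsucc⟩
    refine ⟨_, ⟨w, Or.inl hw, rfl⟩, ⟨⟨⟨s, ⟨Or.inl hs0, (hreach hw hs0).1 hws,
      (hreach hs0 hw).1 hsw⟩, hvs⟩, ?_⟩, hvU⟩, fun u hvu => ?_⟩
    · rintro ⟨-, -, hvw⟩
      exact hG.notMem_V1 hw (eq_of_reach_simplifiedEdges hG hvU.1 hvU.2 hvw ▸ hvU.1)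
    · obtain ⟨hu0, hwu, huw⟩ := hsucc u hvu
      exact ⟨Or.inl hu0, (hreach hw hu0).1 hwu, (hreach hu0 hw).1 huw⟩

lemma V1_subset_of_biUnion_force_eq_empty (hG : G.IsBipartite)
    (h'' : StronglyConnected G.V0 (reducedEdges G c A))
    (hforce : ⋃ S ∈ SCCs G.V0 (reducedEdges G c A), Force G.E (G.V1 \ A) S = ∅)
    (hout : ∀ v ∈ G.V1, ∃ u, (v, u) ∈ G.E) : G.V1 ⊆ A := by
  intro v hv
  by_contra hvA
  obtain ⟨u, hvu⟩ := hout v hv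
  have hu0 := hG.snd_mem_V0 hvu hv
  have hvF : v ∈ Force G.E (G.V1 \ A) G.V0 :=
    ⟨⟨⟨⟨u, hu0, hvu⟩, fun hv0 => hG.notMem_V1 hv0 hv⟩, hv, hvA⟩,
      fun w hvw => hG.snd_mem_V0 hvw hv⟩
  have := Set.mem_biUnion (h''.mem_SCCs hu0) hvF
  rwa [hforce] at this

lemma stronglyConnected_simplifiedEdges_iff (hG : G.IsBipartite) (hA1 : A ⊆ G.V1)
    (hAc : ∀ f ∈ A, (f, c f) ∈ G.E)
    (hforce : ⋃ S ∈ SCCs G.V0 (reducedEdges G c A), Force G.E (G.V1 \ A) S = ∅) :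
    StronglyConnected G.verts (simplifiedEdges G c A) ↔
      StronglyConnected G.V0 (reducedEdges G c A) ∧ StronglyConnected G.verts G.E := by
  constructor
  · intro h
    refine ⟨fun a ha b hb => (reach_reducedEdges_iff hG hA1 hAc ha hb).2
      (h a (Or.inl ha) b (Or.inl hb)), fun a ha b hb => ?_⟩
    exact Relation.ReflTransGen.mono (fun _ _ hxy => simplifiedEdges_subset G hAc hxy) _ _
      (h a ha b hb)
  · rintro ⟨h'', h⟩ a ha b hb
    rcases eq_or_ne a b with rfl | hab
    · exact .refl
    have hW : G.verts.Nontrivial := ⟨a, ha, b, hb, hab⟩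
    have hV1 : G.V1 ⊆ A := V1_subset_of_biUnion_force_eq_empty hG h'' hforce
      fun v hv => h.exists_out_edge hW (Or.inr hv)
    obtain ⟨a0, ha0, haa0⟩ : ∃ a0 ∈ G.V0, Reach (simplifiedEdges G c A) a a0 := by
      rcases ha with ha0 | ha1
      · exact ⟨a, ha0, .refl⟩
      · exact ⟨c a, hG.snd_mem_V0 (hAc a (hV1 ha1)) ha1, .single (Or.inr ⟨a, hV1 ha1, rfl⟩)⟩
    obtain ⟨b0, hb0, hb0b⟩ : ∃ b0 ∈ G.V0, Reach (simplifiedEdges G c A) b0 b := by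
      rcases hb with hb0 | hb1
      · exact ⟨b, hb0, .refl⟩
      · obtain ⟨z, hzb⟩ := h.exists_in_edge hW (Or.inr hb1)
        have hz0 := hG.fst_mem_V0 hzb hb1
        exact ⟨z, hz0, .single (Or.inl ⟨hzb, hz0⟩)⟩
    have ha0b0 := (reach_reducedEdges_iff hG hA1 hAc ha0 hb0).1 (h'' a0 ha0 b0 hb0)
    exact haa0.trans (ha0b0.trans hb0b)

end Force

def forcedSet (G : ConnGame V) (c : V → V) : ℕ → Set V
  | 0 => ∅
  | k + 1 => forcedSet G c k ∪ Fk' G c (k + 1)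

section Derivatives

variable (G : ConnGame V) (c : V → V)

lemma Ek'_eq (k : ℕ) : Ek' G c k = simplifiedEdges G c (forcedSet G c k) := by
  induction k with
  | zero => ext e; simp [Ek', deriv', simplifiedEdges, forcedSet]
  | succ k ih => rw [forcedSet, simplifiedEdges_union, ← ih]; rfl

lemma deriv'_U_eq (k : ℕ) : (deriv' G c k).2.1 = G.V1 \ forcedSet G c k := by
  induction k with
  | zero => simp [deriv', forcedSet]
  | succ k ih =>
    show (deriv' G c k).2.1 \ Fk' G c (k + 1) = _
    rw [ih, forcedSet, Set.sdiff_sdiff]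

lemma Fk'_succ_eq (k : ℕ) : Fk' G c (k + 1) =
    ⋃ S ∈ SCCs G.verts (simplifiedEdges G c (forcedSet G c k)),
      Force G.E (G.V1 \ forcedSet G c k) S := by
  rw [← Ek'_eq, ← deriv'_U_eq]; rfl

variable {G c}

lemma Fk'_succ_subset (k : ℕ) : Fk' G c (k + 1) ⊆ G.V1 \ forcedSet G c k := by
  rw [Fk'_succ_eq]
  exact Set.iUnion₂_subset fun _ _ _ hv => hv.1.2

lemma exists_edge_of_mem_Fk'_succ {k : ℕ} {v : V} (hv : v ∈ Fk' G c (k + 1)) :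
    ∃ u, (v, u) ∈ G.E := by
  rw [Fk'_succ_eq] at hv
  obtain ⟨S, -, ⟨⟨⟨s, -, hvs⟩, -⟩, -⟩, -⟩ := Set.mem_iUnion₂.mp hv
  exact ⟨s, hvs⟩

lemma forcedSet_subset_V1 (k : ℕ) : forcedSet G c k ⊆ G.V1 := by
  induction k with
  | zero => exact Set.empty_subset _
  | succ k ih => exact Set.union_subset ih ((Fk'_succ_subset k).trans Set.sdiff_subset)

lemma exists_edge_of_mem_forcedSet {k : ℕ} {v : V} (hv : v ∈ forcedSet G c k) :
    ∃ u, (v, u) ∈ G.E := by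
  induction k with
  | zero => exact absurd hv (Set.notMem_empty v)
  | succ k ih => exact hv.elim ih exists_edge_of_mem_Fk'_succ

lemma deriv''_eq (hG : G.IsBipartite) (hc : ∀ v : V, (∃ u, (v, u) ∈ G.E) → (v, c v) ∈ G.E)
    (k : ℕ) : deriv'' G c k = (reducedEdges G c (forcedSet G c k), G.V1 \ forcedSet G c k,
      Fk' G c k) := by
  induction k with
  | zero => simp [deriv'', reducedEdges, forcedSet, Fk', deriv']
  | succ k ih =>
    have hF : Fk' G c (k + 1) = ⋃ S ∈ SCCs G.V0 (reducedEdges G c (forcedSet G c k)),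
        Force G.E (G.V1 \ forcedSet G c k) S := by
      rw [Fk'_succ_eq, biUnion_force_simplifiedEdges_eq hG (forcedSet_subset_V1 k)
        fun f hf => hc f (exists_edge_of_mem_forcedSet hf)]
    rw [deriv'', ih]
    simp only [← hF]
    rw [forcedSet, reducedEdges_union, Set.sdiff_sdiff]
    rfl

lemma Fk'_add_two_eq_empty {k : ℕ} (h : Fk' G c (k + 1) = ∅) : Fk' G c (k + 2) = ∅ := by
  have hstable : forcedSet G c (k + 1) = forcedSet G c k := by
    rw [forcedSet, h, Set.union_empty]
  rw [Fk'_succ_eq, hstable, ← Fk'_succ_eq, h]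

lemma exists_Fk'_eq_empty [Finite V] : ∃ k, 0 < k ∧ Fk' G c k = ∅ := by
  by_contra! h
  have hmono : StrictMono (forcedSet G c) := strictMono_nat_of_lt_succ fun k => by
    obtain ⟨v, hv⟩ := h (k + 1) k.succ_pos
    exact (Set.ssubset_iff_of_subset Set.subset_union_left).2
      ⟨v, Or.inr hv, (Fk'_succ_subset k hv).2⟩
  exact not_injective_infinite_finite _ hmono.injective

lemma Fk'_stab'_succ_eq_empty [Finite V] : Fk' G c (stab' G c + 1) = ∅ := by
  obtain ⟨hpos, hempty⟩ : 0 < stab' G c ∧ Fk' G c (stab' G c) = ∅ :=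
    Nat.sInf_mem exists_Fk'_eq_empty
  obtain ⟨k, hk⟩ := Nat.exists_eq_succ_of_ne_zero hpos.ne'
  rw [hk] at hempty ⊢
  exact Fk'_add_two_eq_empty hempty

end Derivatives

/-- With matching edge choices, the simplified derivative `G'_s` at the
stabilization point `s` is strongly connected iff both the reduced derivative `G''_s`
(on vertex set `V0`) and `G` itself are strongly connected. -/
theorem stmt9 [Fintype V] (G : ConnGame V)
    (hdisj : Disjoint G.V0 G.V1)
    (hEsub : G.E ⊆ (G.V0 ×ˢ G.V1) ∪ (G.V1 ×ˢ G.V0))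
    (c : V → V) (hc : ∀ v : V, (∃ u, (v, u) ∈ G.E) → (v, c v) ∈ G.E) :
    StronglyConnected G.verts (Ek' G c (stab' G c)) ↔
      (StronglyConnected G.V0 (Ek'' G c (stab' G c)) ∧
        StronglyConnected G.verts G.E) := by
  have hG : G.IsBipartite := ⟨hdisj, hEsub⟩
  have hA1 := forcedSet_subset_V1 (G := G) (c := c) (stab' G c)
  have hAc : ∀ f ∈ forcedSet G c (stab' G c), (f, c f) ∈ G.E :=
    fun f hf => hc f (exists_edge_of_mem_forcedSet hf)
  rw [Ek'_eq, Ek'', deriv''_eq hG hc]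
  refine stronglyConnected_simplifiedEdges_iff hG hA1 hAc ?_
  rw [← biUnion_force_simplifiedEdges_eq hG hA1 hAc, ← Fk'_succ_eq]
  exact Fk'_stab'_succ_eq_empty

end Games
end
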